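/- For any discrete random variables X, Y, K, A, B (finitely valued) with Y and K determined by (X, A, B), and with (A,B) independent of X, the mutual information satisfies I(X; Y) = H(Y) - H(A,B) + H(A,B | X, Y, K) + H(K | X, Y). -/

import Mathlib

open scoped BigOperators

/-- Probability that the discrete random variable `X` (on a finite sample space with
probability weights `μ`) takes the value `a`. -/
noncomputable def probOf {Ω α : Type*} [Fintype Ω] [DecidableEq α]
    (μ : Ω → ℝ) (X : Ω → α) (a : α) : ℝ :=
  ∑ ω, if X ω = a then μ ω else 0

/-- Shannon entropy (in bits) of the discrete random variable `X`. -/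
noncomputable def entOf {Ω α : Type*} [Fintype Ω] [DecidableEq α]
    (μ : Ω → ℝ) (X : Ω → α) : ℝ :=
  ∑ a ∈ Finset.univ.image X, -(probOf μ X a) * Real.logb 2 (probOf μ X a)

/-- Conditional Shannon entropy `H(A | T)` in bits. -/
noncomputable def condEnt {Ω α β : Type*} [Fintype Ω] [DecidableEq α] [DecidableEq β]
    (μ : Ω → ℝ) (A : Ω → α) (T : Ω → β) : ℝ :=
  entOf μ (fun ω => (A ω, T ω)) - entOf μ T

/-- The binary entropy function (base-2 logarithms). -/
noncomputable def binEnt (p : ℝ) : ℝ := -p * Real.logb 2 p - (1 - p) * Real.logb 2 (1 - p)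

/-
`H(Y,K | X)` is computed in two ways. Since `(Y,K)` is a function of `(X,A,B)`, the joint
entropy `H(X,A,B,Y,K)` equals `H(X,A,B)`, which is `H(X) + H(A,B)` by independence; the rest
is bookkeeping of joint entropies, all invariant under relabelling values by a map that is
invertible on the range of the variable.
-/

open Real

section Entropy

variable {Ω α β : Type*} [Fintype Ω] [DecidableEq α] [DecidableEq β] (μ : Ω → ℝ)

lemma probOf_comp_of_injOn (Z : Ω → α) {φ : α → β} (hφ : Set.InjOn φ (Set.range Z))
    (ω₀ : Ω) : probOf μ (fun ω => φ (Z ω)) (φ (Z ω₀)) = probOf μ Z (Z ω₀) := by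
  unfold probOf
  refine Finset.sum_congr rfl fun ω _ => ?_
  simp only [hφ.eq_iff ⟨ω, rfl⟩ ⟨ω₀, rfl⟩]

lemma entOf_comp_of_injOn (Z : Ω → α) {φ : α → β} (hφ : Set.InjOn φ (Set.range Z)) :
    entOf μ (fun ω => φ (Z ω)) = entOf μ Z := by
  unfold entOf
  have hφ' : Set.InjOn φ (Finset.univ.image Z) := by simpa using hφ
  rw [show Finset.univ.image (fun ω => φ (Z ω)) = (Finset.univ.image Z).image φ from
    (Finset.image_image ..).symm, Finset.sum_image hφ']
  refine Finset.sum_congr rfl fun a ha => ?_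
  obtain ⟨ω₀, -, rfl⟩ := Finset.mem_image.1 ha
  rw [probOf_comp_of_injOn μ Z hφ]

lemma entOf_eq_of_determines {Z : Ω → α} {W : Ω → β} (φ : α → β) (ψ : β → α)
    (hW : ∀ ω, W ω = φ (Z ω)) (hZ : ∀ ω, Z ω = ψ (W ω)) :
    entOf μ W = entOf μ Z := by
  have hφ : Set.InjOn φ (Set.range Z) := by
    rintro _ ⟨ω, rfl⟩ _ ⟨ω', rfl⟩ h
    rw [hZ ω, hZ ω', hW ω, hW ω', h]
  rw [← entOf_comp_of_injOn μ Z hφ]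
  exact congrArg (entOf μ) (funext hW)

lemma probOf_eq_zero_of_notMem_image (Z : Ω → α) {a : α} (ha : a ∉ Finset.univ.image Z) :
    probOf μ Z a = 0 :=
  Finset.sum_eq_zero fun ω _ => if_neg fun h => ha (Finset.mem_image.2 ⟨ω, Finset.mem_univ ω, h⟩)

lemma entOf_eq_sum_negMulLog [Fintype α] (Z : Ω → α) :
    entOf μ Z = (∑ a, negMulLog (probOf μ Z a)) / log 2 := by
  rw [Finset.sum_div, entOf]
  refine Finset.sum_subset_zero_on_sdiff (Finset.subset_univ _) ?_ fun a _ => ?_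
  · intro a ha
    simp [probOf_eq_zero_of_notMem_image μ Z (Finset.mem_sdiff.1 ha).2]
  · rw [negMulLog, ← log_div_log]
    ring

lemma sum_probOf [Fintype α] (Z : Ω → α) : ∑ a, probOf μ Z a = ∑ ω, μ ω := by
  unfold probOf
  rw [Finset.sum_comm]
  simp

end Entropy

lemma sum_negMulLog_mul {ι κ : Type*} [Fintype ι] [Fintype κ] {p : ι → ℝ} {q : κ → ℝ}
    (hp : ∑ i, p i = 1) (hq : ∑ k, q k = 1) :
    ∑ ik : ι × κ, negMulLog (p ik.1 * q ik.2) = ∑ i, negMulLog (p i) + ∑ k, negMulLog (q k) := by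
  simp only [Fintype.sum_prod_type, negMulLog_mul, Finset.sum_add_distrib, ← Finset.sum_mul,
    ← Finset.mul_sum, hp, hq, one_mul]

lemma entOf_prod_of_indep {Ω α β : Type*} [Fintype Ω] [Fintype α] [Fintype β]
    [DecidableEq α] [DecidableEq β] {μ : Ω → ℝ} (hμ1 : ∑ ω, μ ω = 1) (X : Ω → α) (W : Ω → β)
    (hindep : ∀ x w, probOf μ (fun ω => (X ω, W ω)) (x, w) = probOf μ X x * probOf μ W w) :
    entOf μ (fun ω => (X ω, W ω)) = entOf μ X + entOf μ W := by
  have hX : ∑ x, probOf μ X x = 1 := (sum_probOf μ X).trans hμ1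
  have hW : ∑ w, probOf μ W w = 1 := (sum_probOf μ W).trans hμ1
  simp only [entOf_eq_sum_negMulLog, hindep, sum_negMulLog_mul hX hW, add_div]

theorem mutual_info_decomposition_general {Ω 𝕏 𝕐 𝕂 𝔸 𝔹 : Type*} [Fintype Ω]
    [Fintype 𝕏] [Fintype 𝔸] [Fintype 𝔹]
    [DecidableEq 𝕏] [DecidableEq 𝕐] [DecidableEq 𝕂] [DecidableEq 𝔸] [DecidableEq 𝔹]
    (μ : Ω → ℝ) (hμ1 : ∑ ω, μ ω = 1)
    (X : Ω → 𝕏) (Y : Ω → 𝕐) (K : Ω → 𝕂) (A : Ω → 𝔸) (B : Ω → 𝔹)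
    (f : 𝕏 × 𝔸 × 𝔹 → 𝕐) (hf : ∀ ω, Y ω = f (X ω, A ω, B ω))
    (g : 𝕏 × 𝔸 × 𝔹 → 𝕂) (hg : ∀ ω, K ω = g (X ω, A ω, B ω))
    (hindep : ∀ (x : 𝕏) (ab : 𝔸 × 𝔹),
      probOf μ (fun ω => (X ω, (A ω, B ω))) (x, ab)
        = probOf μ X x * probOf μ (fun ω => (A ω, B ω)) ab) :
    entOf μ X + entOf μ Y - entOf μ (fun ω => (X ω, Y ω))
      = entOf μ Y - entOf μ (fun ω => (A ω, B ω))
        + condEnt μ (fun ω => (A ω, B ω)) (fun ω => (X ω, Y ω, K ω))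
        + condEnt μ K (fun ω => (X ω, Y ω)) := by
  have hjoint : entOf μ (fun ω => ((A ω, B ω), (X ω, Y ω, K ω)))
      = entOf μ (fun ω => (X ω, (A ω, B ω))) :=
    entOf_eq_of_determines μ (fun z => (z.2, z.1, f (z.1, z.2), g (z.1, z.2)))
      (fun w => (w.2.1, w.1)) (fun ω => by simp [hf, hg]) (fun _ => rfl)
  have hswap : entOf μ (fun ω => (K ω, (X ω, Y ω))) = entOf μ (fun ω => (X ω, Y ω, K ω)) :=
    entOf_eq_of_determines μ (fun z => (z.2.2, z.1, z.2.1)) (fun w => (w.2.1, w.2.2, w.1))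
      (fun _ => rfl) (fun _ => rfl)
  rw [condEnt, condEnt, hjoint, hswap, entOf_prod_of_indep hμ1 X _ hindep]
  ring

/-- Key decomposition: if `Y` and `K` are determined by `(X, A, B)` and `(A,B)` is
independent of `X`, then
`I(X;Y) = H(Y) - H(A,B) + H(A,B | X,Y,K) + H(K | X,Y)`,
where `I(X;Y) = H(X) + H(Y) - H(X,Y)`. -/
theorem mutual_info_decomposition {Ω 𝕏 𝕐 𝕂 𝔸 𝔹 : Type*} [Fintype Ω]
    [Fintype 𝕏] [Fintype 𝕐] [Fintype 𝕂] [Fintype 𝔸] [Fintype 𝔹]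
    [DecidableEq 𝕏] [DecidableEq 𝕐] [DecidableEq 𝕂] [DecidableEq 𝔸] [DecidableEq 𝔹]
    (μ : Ω → ℝ) (hμ0 : ∀ ω, 0 ≤ μ ω) (hμ1 : ∑ ω, μ ω = 1)
    (X : Ω → 𝕏) (Y : Ω → 𝕐) (K : Ω → 𝕂) (A : Ω → 𝔸) (B : Ω → 𝔹)
    (f : 𝕏 × 𝔸 × 𝔹 → 𝕐) (hf : ∀ ω, Y ω = f (X ω, A ω, B ω))
    (g : 𝕏 × 𝔸 × 𝔹 → 𝕂) (hg : ∀ ω, K ω = g (X ω, A ω, B ω))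
    (hindep : ∀ (x : 𝕏) (ab : 𝔸 × 𝔹),
      probOf μ (fun ω => (X ω, (A ω, B ω))) (x, ab)
        = probOf μ X x * probOf μ (fun ω => (A ω, B ω)) ab) :
    entOf μ X + entOf μ Y - entOf μ (fun ω => (X ω, Y ω))
      = entOf μ Y - entOf μ (fun ω => (A ω, B ω))
        + condEnt μ (fun ω => (A ω, B ω)) (fun ω => (X ω, Y ω, K ω))
        + condEnt μ K (fun ω => (X ω, Y ω)) :=
  mutual_info_decomposition_general μ hμ1 X Y K A B f hf g hg hindep
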